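/- arXiv:2401.10587 — 2 statements merged into one kernel-verified Lean document; each statement's English description precedes it below -/
import Mathlib

section
/- Let C be a fusion category over a field k. Then for every simple object S of C, the left dimension dim_l(S) and the right dimension dim_r(S) are nonzero elements of End_C(𝟙) = k. -/
/-!
`dim_l S = coev'_S ≫ ev_S` pairs a nonzero morphism `𝟙 ⟶ Sᘁ ⊗ S` with a nonzero morphism
`Sᘁ ⊗ S ⟶ 𝟙`. By duality `Hom(Sᘁ ⊗ S, 𝟙) ≅ End S` is one-dimensional, so `ev_S` spans it. By
semisimplicity every nonzero `a : 𝟙 ⟶ Y` has `a ≫ b ≠ 0` for some `b : Y ⟶ 𝟙`: some simple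
summand of `Y` receives a nonzero component of `a`, so it is isomorphic to `𝟙`. Hence
`coev'_S ≫ ev_S ≠ 0`. For `dim_r S = coev_S ≫ ev'_S` the same argument applies, with the pivotal
isomorphism `S ≅ Sᘁᘁ` identifying `Hom(S ⊗ Sᘁ, 𝟙)` with `End S`.
-/

open CategoryTheory MonoidalCategory CategoryTheory.Limits

universe v u

namespace CategoryTheory

namespace ExactPairing

variable {C : Type*} [Category C] [MonoidalCategory C] [Preadditive C] [MonoidalPreadditive C]
  {X Y : C} [ExactPairing X Y]

theorem coevaluation_ne_zero (h : 𝟙 X ≠ 0) : η_ X Y ≠ 0 := by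
  contrapose! h
  simpa [h] using (λ_ X).inv ≫= (evaluation_coevaluation X Y).symm =≫ (ρ_ X).hom

theorem evaluation_ne_zero (h : 𝟙 X ≠ 0) : ε_ X Y ≠ 0 := by
  contrapose! h
  simpa [h] using (λ_ X).inv ≫= (evaluation_coevaluation X Y).symm =≫ (ρ_ X).hom

theorem id_right_ne_zero (h : 𝟙 X ≠ 0) : 𝟙 Y ≠ 0 := by
  intro hY
  apply coevaluation_ne_zero (Y := Y) h
  calc η_ X Y = η_ X Y ≫ X ◁ 𝟙 Y := by simp
    _ = 0 := by simp [hY]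

end ExactPairing

theorem exists_comp_biproduct_π_ne_zero {C : Type*} [Category C] [HasZeroMorphisms C] {J : Type*}
    {f : J → C} [HasBiproduct f] {Z : C} {g : Z ⟶ ⨁ f} (hg : g ≠ 0) :
    ∃ i, g ≫ biproduct.π f i ≠ 0 := by
  by_contra! h
  exact hg (biproduct.hom_ext _ _ fun i => by simp [h i])

section Linear

variable {C : Type*} [Category C] [Preadditive C] (k : Type*) [Field k] [Linear k C]

theorem comp_ne_zero_of_finrank_hom_eq_one {X Y Z : C} {a : X ⟶ Y} {e : Y ⟶ Z}
    (ha : ∃ b : Y ⟶ Z, a ≫ b ≠ 0) (he : e ≠ 0) (hdim : Module.finrank k (Y ⟶ Z) = 1) :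
    a ≫ e ≠ 0 := by
  obtain ⟨b, hb⟩ := ha
  obtain ⟨c, rfl⟩ := (finrank_eq_one_iff_of_nonzero' e he).mp hdim b
  intro h
  rw [Linear.comp_smul, h, smul_zero] at hb
  exact hb rfl

variable [MonoidalCategory C] [MonoidalPreadditive C] [MonoidalLinear k C]

noncomputable def tensorLeftHomLinearEquiv (X Y Y' Z : C) [ExactPairing Y Y'] :
    (Y' ⊗ X ⟶ Z) ≃ₗ[k] (X ⟶ Y ⊗ Z) :=
  { tensorLeftHomEquiv X Y Y' Z with
    map_add' := fun f g => by simp [tensorLeftHomEquiv]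
    map_smul' := fun c f => by simp [tensorLeftHomEquiv] }

noncomputable def tensorRightHomLinearEquiv (X Y Y' Z : C) [ExactPairing Y Y'] :
    (X ⊗ Y ⟶ Z) ≃ₗ[k] (X ⟶ Z ⊗ Y') :=
  { tensorRightHomEquiv X Y Y' Z with
    map_add' := fun f g => by simp [tensorRightHomEquiv]
    map_smul' := fun c f => by simp [tensorRightHomEquiv] }

theorem finrank_dual_tensor_hom_unit (X Y : C) [ExactPairing X Y] :
    Module.finrank k (Y ⊗ X ⟶ 𝟙_ C) = Module.finrank k (X ⟶ X) :=
  ((tensorLeftHomLinearEquiv k X X Y (𝟙_ C)).trans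
    (Linear.homCongr k (Iso.refl X) (ρ_ X))).finrank_eq

theorem finrank_tensor_dual_hom_unit {X Y Y' : C} [ExactPairing Y Y'] (e : X ≅ Y') :
    Module.finrank k (X ⊗ Y ⟶ 𝟙_ C) = Module.finrank k (X ⟶ X) :=
  ((tensorRightHomLinearEquiv k X Y Y' (𝟙_ C)).trans
    (Linear.homCongr k (Iso.refl X) (λ_ Y' ≪≫ e.symm))).finrank_eq

end Linear

end CategoryTheory

namespace Enc

variable {C : Type u} [Category.{v} C] [MonoidalCategory C] [RightRigidCategory C]

/-- The canonical morphism `Yᘁ ⊗ Xᘁ ⟶ (X ⊗ Y)ᘁ`. -/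
noncomputable def dualTensorCompare (X Y : C) : Yᘁ ⊗ Xᘁ ⟶ (X ⊗ Y)ᘁ :=
  (ρ_ (Yᘁ ⊗ Xᘁ)).inv ≫ ((Yᘁ ⊗ Xᘁ) ◁ η_ (X ⊗ Y) ((X ⊗ Y)ᘁ)) ≫
    (α_ (Yᘁ ⊗ Xᘁ) (X ⊗ Y) ((X ⊗ Y)ᘁ)).inv ≫
    (((α_ (Yᘁ) (Xᘁ) (X ⊗ Y)).hom ≫
        ((Yᘁ) ◁ ((α_ (Xᘁ) X Y).inv ≫ (ε_ X (Xᘁ) ▷ Y) ≫ (λ_ Y).hom)) ≫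
        ε_ Y (Yᘁ)) ▷ ((X ⊗ Y)ᘁ)) ≫
    (λ_ ((X ⊗ Y)ᘁ)).hom

/-- The canonical morphism `(X ⊗ Y)ᘁ ⟶ Yᘁ ⊗ Xᘁ`. -/
noncomputable def tensorDualCompare (X Y : C) : (X ⊗ Y)ᘁ ⟶ Yᘁ ⊗ Xᘁ :=
  (ρ_ ((X ⊗ Y)ᘁ)).inv ≫
    (((X ⊗ Y)ᘁ) ◁ (η_ X (Xᘁ) ≫ (((ρ_ X).inv ≫ (X ◁ η_ Y (Yᘁ)) ≫ (α_ X Y (Yᘁ)).inv) ▷ (Xᘁ)) ≫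
        (α_ (X ⊗ Y) (Yᘁ) (Xᘁ)).hom)) ≫
    (α_ ((X ⊗ Y)ᘁ) (X ⊗ Y) ((Yᘁ) ⊗ (Xᘁ))).inv ≫
    (ε_ (X ⊗ Y) ((X ⊗ Y)ᘁ) ▷ ((Yᘁ) ⊗ (Xᘁ))) ≫ (λ_ ((Yᘁ) ⊗ (Xᘁ))).hom

/-- The canonical morphism `(Xᘁ)ᘁ ⊗ (Yᘁ)ᘁ ⟶ ((X ⊗ Y)ᘁ)ᘁ`. -/
noncomputable def doubleDualCompare (X Y : C) : ((Xᘁ)ᘁ) ⊗ ((Yᘁ)ᘁ) ⟶ ((X ⊗ Y)ᘁ)ᘁ :=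
  dualTensorCompare (Yᘁ) (Xᘁ) ≫ (tensorDualCompare X Y)ᘁ

/-- A pivotal structure on a (right) rigid monoidal category: a monoidal natural
isomorphism `X ≅ (Xᘁ)ᘁ`. -/
structure PivotalStructure (C : Type u) [Category.{v} C] [MonoidalCategory C]
    [RightRigidCategory C] where
  φ : ∀ X : C, X ≅ ((Xᘁ)ᘁ)
  naturality : ∀ {X Y : C} (f : X ⟶ Y), f ≫ (φ Y).hom = (φ X).hom ≫ ((fᘁ)ᘁ)
  monoidal : ∀ X Y : C,
    (φ (X ⊗ Y)).hom = ((φ X).hom ⊗ₘ (φ Y).hom) ≫ doubleDualCompare X Y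

variable (P : PivotalStructure C)

/-- Right evaluation `ev'_X : X ⊗ Xᘁ ⟶ 𝟙`. -/
noncomputable def ev' (X : C) : X ⊗ (Xᘁ) ⟶ 𝟙_ C :=
  ((P.φ X).hom ▷ (Xᘁ)) ≫ ε_ (Xᘁ) ((Xᘁ)ᘁ)

/-- Right coevaluation `coev'_X : 𝟙 ⟶ Xᘁ ⊗ X`. -/
noncomputable def coev' (X : C) : 𝟙_ C ⟶ (Xᘁ) ⊗ X :=
  η_ (Xᘁ) ((Xᘁ)ᘁ) ≫ ((Xᘁ) ◁ (P.φ X).inv)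

/-- Left trace of an endomorphism. -/
noncomputable def trl {X : C} (g : X ⟶ X) : 𝟙_ C ⟶ 𝟙_ C :=
  coev' P X ≫ ((Xᘁ) ◁ g) ≫ ε_ X (Xᘁ)

/-- Right trace of an endomorphism. -/
noncomputable def trr {X : C} (g : X ⟶ X) : 𝟙_ C ⟶ 𝟙_ C :=
  η_ X (Xᘁ) ≫ (g ▷ (Xᘁ)) ≫ ev' P X

/-- Left dimension of an object. -/
noncomputable def diml (X : C) : 𝟙_ C ⟶ 𝟙_ C := trl P (𝟙 X)

/-- Right dimension of an object. -/
noncomputable def dimr (X : C) : 𝟙_ C ⟶ 𝟙_ C := trr P (𝟙 X)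

section Fusion

universe u'

/-- An object `S` is simple if its endomorphism space is one-dimensional over `k`. -/
def IsSimpleObj (k : Type u') [Field k] {D : Type u} [Category.{v} D] [Preadditive D]
    [Linear k D] (S : D) : Prop :=
  Module.finrank k (S ⟶ S) = 1

/-- The defining conditions of a fusion category: `D` (an additive `k`-linear pivotal
category) is fusion if every object is a finite direct sum of simple objects, Hom spaces
between non-isomorphic simple objects vanish, the unit object is simple, and there are
finitely many isomorphism classes of simple objects. -/
structure IsFusion (k : Type u') [Field k] (D : Type u) [Category.{v} D]
    [MonoidalCategory D] [Preadditive D] [Linear k D] [HasFiniteBiproducts D] : Prop where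
  sum_of_simples : ∀ X : D, ∃ (n : ℕ) (f : Fin n → D),
    (∀ i, IsSimpleObj k (f i)) ∧ Nonempty (X ≅ ⨁ f)
  hom_vanish : ∀ S S' : D, IsSimpleObj k S → IsSimpleObj k S' →
    ¬ Nonempty (S ≅ S') → ∀ f : S ⟶ S', f = 0
  unit_simple : IsSimpleObj k (𝟙_ D)
  finitely_many : ∃ (n : ℕ) (f : Fin n → D),
    ∀ S : D, IsSimpleObj k S → ∃ i, Nonempty (S ≅ f i)

/-- A pivotal category is spherical if left and right traces coincide. -/
def IsSpherical {D : Type u} [Category.{v} D] [MonoidalCategory D] [RightRigidCategory D]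
    (P : PivotalStructure D) : Prop :=
  ∀ (X : D) (g : X ⟶ X), trl P g = trr P g

/-- A representative set of simple objects: a finite family of pairwise non-isomorphic
simple objects, containing the unit object (up to isomorphism), such that every simple
object is isomorphic to (exactly) one member of the family. -/
structure IsRepresentativeSet (k : Type u') [Field k] {D : Type u} [Category.{v} D]
    [MonoidalCategory D] [Preadditive D] [Linear k D] {n : ℕ} (obj : Fin n → D) :
    Prop where
  simple : ∀ i, IsSimpleObj k (obj i)
  unit_mem : ∃ i, Nonempty (obj i ≅ 𝟙_ D)
  covers : ∀ S : D, IsSimpleObj k S → ∃ i, Nonempty (S ≅ obj i)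
  distinct : ∀ i j, Nonempty (obj i ≅ obj j) → i = j

theorem IsSimpleObj.id_ne_zero {k : Type*} [Field k] {D : Type*} [Category D] [Preadditive D]
    [Linear k D] {S : D} (hS : IsSimpleObj k S) : 𝟙 S ≠ 0 := by
  intro h
  have : Subsingleton (S ⟶ S) := ⟨((IsZero.iff_id_eq_zero S).2 h).eq_of_src⟩
  rw [IsSimpleObj, Module.finrank_zero_of_subsingleton] at hS
  exact zero_ne_one hS

theorem IsFusion.exists_comp_ne_zero {k : Type*} [Field k] {D : Type*} [Category D]
    [MonoidalCategory D] [Preadditive D] [Linear k D] [HasFiniteBiproducts D]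
    (hfus : IsFusion k D) {Y : D} {a : 𝟙_ D ⟶ Y} (ha : a ≠ 0) : ∃ b : Y ⟶ 𝟙_ D, a ≫ b ≠ 0 := by
  obtain ⟨n, f, hsimple, ⟨e⟩⟩ := hfus.sum_of_simples Y
  obtain ⟨i, hi⟩ := exists_comp_biproduct_π_ne_zero (g := a ≫ e.hom) (by simpa using ha)
  obtain ⟨u⟩ : Nonempty (𝟙_ D ≅ f i) := by
    by_contra hne
    exact hi (hfus.hom_vanish _ _ hfus.unit_simple (hsimple i) hne _)
  refine ⟨e.hom ≫ biproduct.π f i ≫ u.inv, ?_⟩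
  simpa only [← Category.assoc, ne_eq, Preadditive.IsIso.comp_right_eq_zero] using hi

variable (k : Type u') [Field k]
variable [Preadditive C] [Linear k C] [MonoidalPreadditive C] [MonoidalLinear k C]
  [HasFiniteBiproducts C]

theorem diml_ne_zero (hfus : IsFusion k C) {S : C} (hS : IsSimpleObj k S) : diml P S ≠ 0 := by
  have hid := hS.id_ne_zero
  have hcoev : coev' P S ≠ 0 := by
    simpa [coev'] using ExactPairing.coevaluation_ne_zero (ExactPairing.id_right_ne_zero hid)
  have hdim : Module.finrank k (Sᘁ ⊗ S ⟶ 𝟙_ C) = 1 :=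
    (finrank_dual_tensor_hom_unit k S (Sᘁ)).trans hS
  simpa [diml, trl] using comp_ne_zero_of_finrank_hom_eq_one k (hfus.exists_comp_ne_zero hcoev)
    (ExactPairing.evaluation_ne_zero hid) hdim

theorem dimr_ne_zero (hfus : IsFusion k C) {S : C} (hS : IsSimpleObj k S) : dimr P S ≠ 0 := by
  have hid := hS.id_ne_zero
  have hev : ev' P S ≠ 0 := by
    simpa [ev'] using ExactPairing.evaluation_ne_zero (ExactPairing.id_right_ne_zero hid)
  have hdim : Module.finrank k (S ⊗ Sᘁ ⟶ 𝟙_ C) = 1 :=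
    (finrank_tensor_dual_hom_unit k (P.φ S)).trans hS
  simpa [dimr, trr] using comp_ne_zero_of_finrank_hom_eq_one k
    (hfus.exists_comp_ne_zero (ExactPairing.coevaluation_ne_zero hid)) hev hdim

/-- in a fusion category, the left and right dimensions of any simple object
are nonzero in `End(𝟙) = k`. -/
theorem simple_dim_ne_zero (hfus : IsFusion k C) (S : C) (hS : IsSimpleObj k S) :
    diml P S ≠ 0 ∧ dimr P S ≠ 0 :=
  ⟨diml_ne_zero P k hfus hS, dimr_ne_zero P k hfus hS⟩

end Fusion

end Enc
end

section
/- Let C be a fusion category over a field k. Then C is spherical (i.e., tr_l(g) = tr_r(g) for every endomorphism g in C) if and only if every simple object S of C satisfies dim_l(S) = dim_r(S). -/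
/-! Both traces are cyclic and additive, hence invariant under conjugation by isomorphisms
and additive over the diagonal blocks of an endomorphism of a finite biproduct. In a fusion
category every object is a finite biproduct of simple objects, and an endomorphism of a
simple object `S` is a scalar `c • 𝟙 S`, whose two traces are `c • dim_l S` and `c • dim_r S`. -/

open CategoryTheory MonoidalCategory CategoryTheory.Limits

universe v u

namespace Enc

variable {C : Type u} [Category.{v} C] [MonoidalCategory C] [RightRigidCategory C]

variable (P : PivotalStructure C)

section Fusion

universe u'

theorem IsSimpleObj.exists_smul_id {K : Type*} [Field K] {D : Type*} [Category D]
    [Preadditive D] [Linear K D] {S : D} (hS : IsSimpleObj K S) (u : S ⟶ S) :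
    ∃ c : K, c • 𝟙 S = u := by
  have hid : 𝟙 S ≠ 0 := by
    intro h
    have : Subsingleton (S ⟶ S) := ⟨fun a b => by rw [← Category.comp_id a,
      ← Category.comp_id b, h, comp_zero, comp_zero]⟩
    rw [IsSimpleObj, Module.finrank_zero_of_subsingleton] at hS
    exact zero_ne_one hS
  exact (finrank_eq_one_iff_of_nonzero' _ hid).mp hS u

section Trace

variable {X Y : C}

theorem trl_comp_comm (a : X ⟶ Y) (b : Y ⟶ X) : trl P (a ≫ b) = trl P (b ≫ a) := by
  have hnat : (P.φ X).inv ≫ a = aᘁᘁ ≫ (P.φ Y).inv := by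
    rw [Iso.inv_comp_eq, ← Category.assoc, Iso.eq_comp_inv]
    exact P.naturality a
  dsimp only [trl, coev']
  calc _ = η_ (Xᘁ) ((Xᘁ)ᘁ) ≫ (Xᘁ ◁ aᘁᘁ) ≫ (Xᘁ ◁ ((P.φ Y).inv ≫ b)) ≫ ε_ X (Xᘁ) := by
        simp only [← MonoidalCategory.whiskerLeft_comp_assoc, Category.assoc,
          reassoc_of% hnat]
    _ = η_ (Yᘁ) ((Yᘁ)ᘁ) ≫ (aᘁ ▷ (Yᘁ)ᘁ) ≫ (Xᘁ ◁ ((P.φ Y).inv ≫ b)) ≫ ε_ X (Xᘁ) := by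
        rw [coevaluation_comp_rightAdjointMate_assoc]
    _ = η_ (Yᘁ) ((Yᘁ)ᘁ) ≫ (Yᘁ ◁ ((P.φ Y).inv ≫ b)) ≫ (aᘁ ▷ X) ≫ ε_ X (Xᘁ) := by
        rw [← whisker_exchange_assoc]
    _ = η_ (Yᘁ) ((Yᘁ)ᘁ) ≫ (Yᘁ ◁ ((P.φ Y).inv ≫ b)) ≫ (Yᘁ ◁ a) ≫ ε_ Y (Yᘁ) := by
        rw [rightAdjointMate_comp_evaluation]
    _ = _ := by
        simp only [← MonoidalCategory.whiskerLeft_comp_assoc, Category.assoc]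

theorem trr_comp_comm (a : X ⟶ Y) (b : Y ⟶ X) : trr P (a ≫ b) = trr P (b ≫ a) := by
  dsimp only [trr, ev']
  calc _ = η_ X (Xᘁ) ≫ ((a ≫ (P.φ Y).hom) ▷ Xᘁ) ≫ (bᘁᘁ ▷ Xᘁ) ≫ ε_ (Xᘁ) ((Xᘁ)ᘁ) := by
        simp only [← comp_whiskerRight_assoc, Category.assoc, P.naturality b]
    _ = η_ X (Xᘁ) ≫ ((a ≫ (P.φ Y).hom) ▷ Xᘁ) ≫ ((Yᘁ)ᘁ ◁ bᘁ) ≫ ε_ (Yᘁ) ((Yᘁ)ᘁ) := by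
        rw [rightAdjointMate_comp_evaluation]
    _ = η_ X (Xᘁ) ≫ (X ◁ bᘁ) ≫ ((a ≫ (P.φ Y).hom) ▷ Yᘁ) ≫ ε_ (Yᘁ) ((Yᘁ)ᘁ) := by
        rw [whisker_exchange_assoc]
    _ = η_ Y (Yᘁ) ≫ (b ▷ Yᘁ) ≫ ((a ≫ (P.φ Y).hom) ▷ Yᘁ) ≫ ε_ (Yᘁ) ((Yᘁ)ᘁ) := by
        rw [coevaluation_comp_rightAdjointMate_assoc]
    _ = _ := by
        simp only [← comp_whiskerRight_assoc, Category.assoc]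

theorem trl_eq_trr_of_iso (e : X ≅ Y) (hY : ∀ g : Y ⟶ Y, trl P g = trr P g) (g : X ⟶ X) :
    trl P g = trr P g := by
  have hconj : g = e.hom ≫ e.inv ≫ g := by simp
  rw [hconj, trl_comp_comm, trr_comp_comm, hY]

end Trace

section Linear

variable [Preadditive C] [MonoidalPreadditive C] {X : C}

theorem trl_sum {J : Type*} (s : Finset J) (g : J → (X ⟶ X)) :
    trl P (∑ j ∈ s, g j) = ∑ j ∈ s, trl P (g j) := by
  simp only [trl, whiskerLeft_sum, Preadditive.comp_sum, Preadditive.sum_comp]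

theorem trr_sum {J : Type*} (s : Finset J) (g : J → (X ⟶ X)) :
    trr P (∑ j ∈ s, g j) = ∑ j ∈ s, trr P (g j) := by
  simp only [trr, sum_whiskerRight, Preadditive.comp_sum, Preadditive.sum_comp]

theorem trl_smul {R : Type*} [Semiring R] [Linear R C] [MonoidalLinear R C] (c : R)
    (g : X ⟶ X) : trl P (c • g) = c • trl P g := by
  simp only [trl, MonoidalLinear.whiskerLeft_smul, Linear.comp_smul, Linear.smul_comp]

theorem trr_smul {R : Type*} [Semiring R] [Linear R C] [MonoidalLinear R C] (c : R)
    (g : X ⟶ X) : trr P (c • g) = c • trr P g := by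
  simp only [trr, MonoidalLinear.smul_whiskerRight, Linear.comp_smul, Linear.smul_comp]

theorem trl_biproduct {J : Type} [Fintype J] (f : J → C) [HasBiproduct f] (g : ⨁ f ⟶ ⨁ f) :
    trl P g = ∑ j, trl P (biproduct.ι f j ≫ g ≫ biproduct.π f j) := by
  conv_lhs => rw [← Category.comp_id g, ← biproduct.total, Preadditive.comp_sum]
  simp only [trl_sum, ← Category.assoc, trl_comp_comm P _ (biproduct.ι f _)]

theorem trr_biproduct {J : Type} [Fintype J] (f : J → C) [HasBiproduct f] (g : ⨁ f ⟶ ⨁ f) :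
    trr P g = ∑ j, trr P (biproduct.ι f j ≫ g ≫ biproduct.π f j) := by
  conv_lhs => rw [← Category.comp_id g, ← biproduct.total, Preadditive.comp_sum]
  simp only [trr_sum, ← Category.assoc, trr_comp_comm P _ (biproduct.ι f _)]

theorem trl_eq_trr_biproduct {J : Type} [Fintype J] (f : J → C) [HasBiproduct f]
    (hf : ∀ j, ∀ g : f j ⟶ f j, trl P g = trr P g) (g : ⨁ f ⟶ ⨁ f) :
    trl P g = trr P g := by
  rw [trl_biproduct, trr_biproduct]
  exact Finset.sum_congr rfl fun j _ => hf j _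

theorem trl_eq_trr_of_isSimpleObj {K : Type*} [Field K] [Linear K C] [MonoidalLinear K C]
    {S : C} (hS : IsSimpleObj K S) (hdim : diml P S = dimr P S) (u : S ⟶ S) :
    trl P u = trr P u := by
  obtain ⟨c, rfl⟩ := hS.exists_smul_id u
  rw [trl_smul, trr_smul]
  exact congrArg (c • ·) hdim

end Linear

variable (k : Type u') [Field k]
variable [Preadditive C] [Linear k C] [MonoidalPreadditive C] [MonoidalLinear k C]
  [HasFiniteBiproducts C]

/-- a fusion category is spherical if and only if every simple object has
equal left and right dimensions. -/
theorem spherical_iff_simple_dims_eq (hfus : IsFusion k C) :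
    IsSpherical P ↔ (∀ S : C, IsSimpleObj k S → diml P S = dimr P S) := by
  refine ⟨fun hsph S _ => hsph S (𝟙 S), fun hdim X => ?_⟩
  obtain ⟨n, f, hsimple, ⟨e⟩⟩ := hfus.sum_of_simples X
  exact trl_eq_trr_of_iso P e <| trl_eq_trr_biproduct P f fun j =>
    trl_eq_trr_of_isSimpleObj P (hsimple j) (hdim _ (hsimple j))

end Fusion

end Enc
end
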